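/- arXiv:2403.19629 — 5 statements merged into one kernel-verified Lean document; each statement's English description precedes it below -/
import Mathlib

section
/- There exists a set of four points in ℝ² that is in general linear position (no three points collinear, equivalently difference vectors from any star graph with at most 2 edges are linearly independent) but does not have generic pairwise relations. Concretely, the points x₁ = (0,0), x₂ = (1,0), x₃ = (1,1), x₄ = (2,1) satisfy x₂ - x₁ = x₄ - x₃, so the acyclic graph with edges (x₂,x₁) and (x₄,x₃) has linearly dependent difference vectors, while no three of the points are collinear. -/
lemma collinear_det_zero (a b c : Fin 2 → ℝ)
    (h : Collinear ℝ ({a, b, c} : Set (Fin 2 → ℝ))) :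
    (b 0 - a 0) * (c 1 - a 1) - (b 1 - a 1) * (c 0 - a 0) = 0 := by
  rw [collinear_iff_of_mem (show a ∈ ({a, b, c} : Set (Fin 2 → ℝ)) by simp)] at h
  obtain ⟨v, hv⟩ := h
  obtain ⟨cb, hb⟩ := hv b (by simp)
  obtain ⟨cc, hc⟩ := hv c (by simp)
  have hb0 := congrFun hb 0
  have hb1 := congrFun hb 1
  have hc0 := congrFun hc 0
  have hc1 := congrFun hc 1
  simp only [Pi.add_apply, Pi.smul_apply, smul_eq_mul, vadd_eq_add] at hb0 hb1 hc0 hc1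
  rw [hb0, hb1, hc0, hc1]; ring

/-- The four points `(0,0), (1,0), (1,1), (2,1)` in `ℝ²` are in general linear
position (no three of them are collinear), yet they fail to have generic pairwise
relations: `x₂ - x₁ = x₄ - x₃`, so the difference vectors along the acyclic graph
with edges `(x₂, x₁)` and `(x₄, x₃)` are linearly dependent. -/
theorem general_linear_position_not_generic_pairwise :
    ∃ x₁ x₂ x₃ x₄ : Fin 2 → ℝ,
      x₁ = ![0, 0] ∧ x₂ = ![1, 0] ∧ x₃ = ![1, 1] ∧ x₄ = ![2, 1] ∧
      -- the pairwise-generic relations fail along the acyclic graph {(x₂,x₁), (x₄,x₃)}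
      x₂ - x₁ = x₄ - x₃ ∧
      ¬ LinearIndependent ℝ ![x₂ - x₁, x₄ - x₃] ∧
      -- but the points are in general linear position: no three are collinear
      (∀ p q r : Fin 2 → ℝ, p ∈ ({x₁, x₂, x₃, x₄} : Set (Fin 2 → ℝ)) →
        q ∈ ({x₁, x₂, x₃, x₄} : Set (Fin 2 → ℝ)) →
        r ∈ ({x₁, x₂, x₃, x₄} : Set (Fin 2 → ℝ)) →
        p ≠ q → p ≠ r → q ≠ r →
        ¬ Collinear ℝ ({p, q, r} : Set (Fin 2 → ℝ))) := by
  refine ⟨![0, 0], ![1, 0], ![1, 1], ![2, 1], rfl, rfl, rfl, rfl, ?_, ?_, ?_⟩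
  · funext i; fin_cases i <;> norm_num
  · intro h
    have heq : (![1, 0] - ![0, 0] : Fin 2 → ℝ) = ![2, 1] - ![1, 1] := by
      funext i; fin_cases i <;> norm_num
    have h01 : (0 : Fin 2) = 1 := h.injective (by
      show (![![1,0]-![0,0], ![2,1]-![1,1]] : Fin 2 → Fin 2 → ℝ) 0 = _
      simp [heq])
    exact absurd h01 (by decide)
  · intro p q r hp hq hr hpq hpr hqr hcol
    have hdet := collinear_det_zero p q r hcol
    simp only [Set.mem_insert_iff, Set.mem_singleton_iff] at hp hq hr
    rcases hp with rfl | rfl | rfl | rfl <;>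
      rcases hq with rfl | rfl | rfl | rfl <;>
        rcases hr with rfl | rfl | rfl | rfl <;>
          first
          | exact hpq rfl
          | exact hpr rfl
          | exact hqr rfl
          | norm_num at hdet
end

section
/- Fix a positive definite matrix M ∈ ℝ^{d×d}, a vector v ∈ ℝ^d, and a set of m ≤ d item pairs {(x_{i₀}, x_{i₁})} from a set X ⊂ ℝ^d with generic pairwise relations. Then for every positive definite matrix M' ∈ ℝ^{d×d}, there exists v' ∈ ℝ^d such that for all i ∈ [m]: ⟨x_{i₀}x_{i₀}ᵀ - x_{i₁}x_{i₁}ᵀ, M⟩ + ⟨x_{i₀} - x_{i₁}, v⟩ = ⟨x_{i₀}x_{i₀}ᵀ - x_{i₁}x_{i₁}ᵀ, M'⟩ + ⟨x_{i₀} - x_{i₁}, v'⟩, where ⟨A,B⟩ = tr(AᵀB) for matrices. -/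
open Matrix

/-- A set `X ⊆ ℝ^d` has *generic pairwise relations* if for any (directed) acyclic graph
on `X` with at most `d` distinct edges, the difference vectors along the edges are
linearly independent. -/
def HasGenericPairwiseRelations (d : ℕ) (X : Set (Fin d → ℝ)) : Prop :=
  ∀ (m : ℕ) (e : Fin m → (Fin d → ℝ) × (Fin d → ℝ)),
    m ≤ d →
    (∀ i, (e i).1 ∈ X ∧ (e i).2 ∈ X ∧ (e i).1 ≠ (e i).2) →
    Function.Injective (fun i => s((e i).1, (e i).2)) →
    (SimpleGraph.fromEdgeSet (Set.range fun i => s((e i).1, (e i).2))).IsAcyclic →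
    LinearIndependent ℝ (fun i => (e i).1 - (e i).2)

/-- The unquantized measurement `⟨xxᵀ - x'x'ᵀ, M⟩ + ⟨x - x', v⟩`, using the trace
inner product on matrices. -/
noncomputable def measurement {d : ℕ} (x x' : Fin d → ℝ)
    (M : Matrix (Fin d) (Fin d) ℝ) (v : Fin d → ℝ) : ℝ :=
  Matrix.trace ((vecMulVec x x - vecMulVec x' x')ᵀ * M) + (x - x') ⬝ᵥ v

section Aux
variable {V : Type*} [DecidableEq V]

/-- incidence vector of an ordered pair -/
noncomputable def incVec (p : V × V) : V →₀ ℝ :=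
  Finsupp.single p.1 1 - Finsupp.single p.2 1

lemma walk_dart_sum {G : SimpleGraph V} {u v : V} (w : G.Walk u v) :
    (w.darts.map fun k => (Finsupp.single k.fst (1:ℝ) - Finsupp.single k.snd 1)).sum
      = Finsupp.single u 1 - Finsupp.single v 1 := by
  induction w with
  | nil => simp
  | cons h p ih =>
      rw [SimpleGraph.Walk.darts_cons, List.map_cons, List.sum_cons, ih]
      abel

lemma acyclic_of_incVec_linearIndependent {n : ℕ} (f : Fin n → V × V)
    (hind : LinearIndependent ℝ fun k => incVec (f k)) :
    (SimpleGraph.fromEdgeSet (Set.range fun k => s((f k).1, (f k).2))).IsAcyclic := by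
  classical
  set G := SimpleGraph.fromEdgeSet (Set.range fun k => s((f k).1, (f k).2)) with hG
  intro a p hp
  have key : ∀ k : G.Dart, ∃ i, s((f i).1, (f i).2) = s(k.fst, k.snd) := by
    intro k
    have h := k.adj
    exact ((SimpleGraph.fromEdgeSet_adj _).mp h).1
  let g : G.Dart → Fin n := fun k => (key k).choose
  have hg : ∀ k : G.Dart, s((f (g k)).1, (f (g k)).2) = s(k.fst, k.snd) :=
    fun k => (key k).choose_spec
  let sgn : G.Dart → ℝ := fun k => if (f (g k)).1 = k.fst then 1 else -1
  have hfstne : ∀ k : G.Dart, k.fst ≠ k.snd := fun k => G.ne_of_adj k.adj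
  have hsgn : ∀ k : G.Dart,
      Finsupp.single k.fst (1:ℝ) - Finsupp.single k.snd 1 = sgn k • incVec (f (g k)) := by
    intro k
    rcases Sym2.eq_iff.mp (hg k) with ⟨h1, h2⟩ | ⟨h1, h2⟩
    · simp only [sgn, if_pos h1, one_smul, incVec, h1, h2]
    · have hne : ¬ (f (g k)).1 = k.fst := by rw [h1]; exact (hfstne k).symm
      simp only [sgn, if_neg hne, incVec, h1, h2, neg_smul, one_smul, neg_sub]
  have hsgn_ne : ∀ k : G.Dart, sgn k ≠ 0 := by
    intro k
    simp only [sgn]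
    split <;> norm_num
  have hnodup : p.darts.Nodup := by
    have h1 : p.edges.Nodup := hp.isTrail.edges_nodup
    exact List.Nodup.of_map SimpleGraph.Dart.edge h1
  have hedge : ∀ k : G.Dart, k.edge = s(k.fst, k.snd) := fun k => rfl
  have hinj : ∀ k ∈ p.darts, ∀ k' ∈ p.darts, g k = g k' → k = k' := by
    intro k hk k' hk' hgk
    have h1 : k.edge = k'.edge := by
      rw [hedge, hedge, ← hg k, ← hg k', hgk]
    exact List.inj_on_of_nodup_map hp.isTrail.edges_nodup hk hk' h1
  have h0 : ∑ k ∈ p.darts.toFinset, (Finsupp.single k.fst (1:ℝ) - Finsupp.single k.snd 1) = 0 := by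
    rw [List.sum_toFinset _ hnodup, walk_dart_sum]
    simp
  have h1 : ∑ k ∈ p.darts.toFinset, sgn k • incVec (f (g k)) = 0 := by
    rw [← h0]
    exact (Finset.sum_congr rfl fun k _ => (hsgn k).symm)
  have h2 : ∀ j : Fin n, (∑ k ∈ p.darts.toFinset.filter (fun k => g k = j), sgn k) = 0 := by
    have hfib : ∑ j : Fin n, ∑ k ∈ p.darts.toFinset.filter (fun k => g k = j),
        sgn k • incVec (f (g k)) = 0 := by
      rw [Finset.sum_fiberwise_of_maps_to (fun k _ => Finset.mem_univ (g k))]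
      exact h1
    have hfib' : ∑ j : Fin n, (∑ k ∈ p.darts.toFinset.filter (fun k => g k = j), sgn k)
        • incVec (f j) = 0 := by
      rw [← hfib]
      refine Finset.sum_congr rfl fun j _ => ?_
      rw [Finset.sum_smul]
      refine Finset.sum_congr rfl fun k hk => ?_
      rw [(Finset.mem_filter.mp hk).2]
    exact Fintype.linearIndependent_iff.mp hind _ hfib'
  have hne : p.darts ≠ [] := by
    have h3 := hp.three_le_length
    intro hnil
    have : p.darts.length = p.length := SimpleGraph.Walk.length_darts p
    rw [hnil] at this
    simp only [List.length_nil] at this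
    omega
  obtain ⟨k₀, hk₀⟩ := List.exists_mem_of_ne_nil _ hne
  have hfilter : p.darts.toFinset.filter (fun k => g k = g k₀) = {k₀} := by
    ext k
    simp only [Finset.mem_filter, List.mem_toFinset, Finset.mem_singleton]
    constructor
    · rintro ⟨hk, hgk⟩
      exact hinj k hk k₀ (by exact hk₀) hgk
    · rintro rfl
      exact ⟨hk₀, rfl⟩
  have := h2 (g k₀)
  rw [hfilter, Finset.sum_singleton] at this
  exact hsgn_ne k₀ this

end Aux

section Aux2
variable {V : Type*} [DecidableEq V]

lemma sym2_injective_of_incVec_linearIndependent {n : ℕ} (f : Fin n → V × V)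
    (hind : LinearIndependent ℝ fun k => incVec (f k)) :
    Function.Injective fun k => s((f k).1, (f k).2) := by
  classical
  intro k l h
  dsimp only at h
  rcases Sym2.eq_iff.mp h with ⟨h1, h2⟩ | ⟨h1, h2⟩
  · refine hind.injective ?_
    rw [incVec, incVec, h1, h2]
  · exfalso
    have hkl : incVec (f k) + incVec (f l) = 0 := by
      rw [incVec, incVec, h1, h2]
      abel
    have hsum : ∑ j, ((if j = k then (1:ℝ) else 0) + (if j = l then 1 else 0))
        • incVec (f j) = 0 := by
      simp only [add_smul, ite_smul, one_smul, zero_smul, Finset.sum_add_distrib,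
        Finset.sum_ite_eq', Finset.mem_univ, if_pos]
      exact hkl
    have := Fintype.linearIndependent_iff.mp hind _ hsum k
    simp only [if_pos rfl] at this
    by_cases hkl2 : k = l <;> simp [hkl2] at this

end Aux2

/-- Impossibility result (single user): with `m ≤ d` comparisons over items with
generic pairwise relations, every positive-definite matrix `M'` is consistent with
the data, for a suitable pseudo-ideal point `v'`. -/
theorem impossibility_single_user
    (d m : ℕ) (hm : m ≤ d)
    (X : Set (Fin d → ℝ)) (hX : HasGenericPairwiseRelations d X)
    (e : Fin m → (Fin d → ℝ) × (Fin d → ℝ))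
    (he : ∀ i, (e i).1 ∈ X ∧ (e i).2 ∈ X)
    (M : Matrix (Fin d) (Fin d) ℝ) (hM : M.PosDef) (v : Fin d → ℝ)
    (M' : Matrix (Fin d) (Fin d) ℝ) (hM' : M'.PosDef) :
    ∃ v' : Fin d → ℝ, ∀ i : Fin m,
      measurement (e i).1 (e i).2 M v = measurement (e i).1 (e i).2 M' v' := by
  classical
  set F : (Fin d → ℝ) → ℝ :=
    fun z => Matrix.trace ((vecMulVec z z)ᵀ * (M - M')) + z ⬝ᵥ v with hF
  set w : Fin m → ((Fin d → ℝ) →₀ ℝ) := fun i => incVec (e i) with hw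
  obtain ⟨I, hI, hImax⟩ := exists_maximal_linearIndepOn ℝ w
  haveI : Fintype I := Set.Finite.fintype (Set.toFinite I)
  set n := Fintype.card I with hn
  obtain ⟨eqv⟩ : Nonempty (Fin n ≃ I) := ⟨(Fintype.equivFin I).symm⟩
  set f : Fin n → (Fin d → ℝ) × (Fin d → ℝ) := fun k => e (eqv k) with hf
  have hindf : LinearIndependent ℝ fun k => incVec (f k) := hI.comp eqv eqv.injective
  have hnefk : ∀ k, (f k).1 ≠ (f k).2 := by
    intro k hk
    exact hindf.ne_zero k (by simp [incVec, hk])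
  have hnd : n ≤ d := by
    refine le_trans ?_ hm
    calc n ≤ Fintype.card (Fin m) := Fintype.card_le_of_injective _ Subtype.val_injective
    _ = m := Fintype.card_fin m
  have hdiff : LinearIndependent ℝ (fun k => (f k).1 - (f k).2) :=
    hX n f hnd (fun k => ⟨(he _).1, (he _).2, hnefk k⟩)
      (sym2_injective_of_incVec_linearIndependent f hindf)
      (acyclic_of_incVec_linearIndependent f hindf)
  set u : Fin n → (Fin d → ℝ) := fun k => (f k).1 - (f k).2 with hu
  have hrange : LinearIndepOn ℝ id (Set.range u) :=
    (linearIndepOn_id_range_iff hdiff.injective).mpr hdiff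
  set B := Module.Basis.extend hrange with hB
  set q : ((Fin d → ℝ) →₀ ℝ) →ₗ[ℝ] ℝ := Finsupp.linearCombination ℝ F with hq
  set P : ((Fin d → ℝ) →₀ ℝ) →ₗ[ℝ] (Fin d → ℝ) := Finsupp.linearCombination ℝ id with hP
  set t : hrange.extend (Set.subset_univ _) → ℝ :=
    fun x => if h : ∃ k, u k = ↑x then q (incVec (f h.choose)) else 0 with ht
  set L : (Fin d → ℝ) →ₗ[ℝ] ℝ := B.constr ℝ t with hL
  have hLu : ∀ k, L (u k) = q (incVec (f k)) := by
    intro k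
    have hmem : u k ∈ hrange.extend (Set.subset_univ _) :=
      hrange.subset_extend _ ⟨k, rfl⟩
    have h1 : L (B ⟨u k, hmem⟩) = t ⟨u k, hmem⟩ := B.constr_basis ℝ t _
    rw [Module.Basis.extend_apply_self] at h1
    rw [h1, ht]
    dsimp only
    have hex : ∃ k', u k' = u k := ⟨k, rfl⟩
    rw [dif_pos hex]
    have h2 : hex.choose = k := hdiff.injective hex.choose_spec
    rw [h2]
  set v' : Fin d → ℝ := fun j => L (Pi.single j 1) with hv'
  have hdot : ∀ x : Fin d → ℝ, x ⬝ᵥ v' = L x := by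
    intro x
    have hx : ∑ j, x j • (Pi.single j 1 : Fin d → ℝ) = x := by
      ext i
      simp [Finset.sum_apply, Pi.single_apply]
    calc x ⬝ᵥ v' = ∑ j, x j • L ((Pi.single j 1 : Fin d → ℝ)) := by
          simp [dotProduct, v', smul_eq_mul]
    _ = L (∑ j, x j • (Pi.single j 1 : Fin d → ℝ)) := by rw [map_sum]; simp only [_root_.map_smul]
    _ = L x := by rw [hx]
  have hPw : ∀ i, P (w i) = (e i).1 - (e i).2 := by
    intro i
    simp [hw, incVec, hP, Finsupp.linearCombination_single]
  have hqw : ∀ i, q (w i) = F (e i).1 - F (e i).2 := by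
    intro i
    simp [hw, incVec, hq, Finsupp.linearCombination_single]
  have hspan : ∀ i, w i ∈ Submodule.span ℝ (Set.range fun k => incVec (f k)) := by
    intro i
    have hr : Set.range (fun k => incVec (f k)) = w '' I := by
      rw [show (fun k => incVec (f k)) = (fun x : I => w ↑x) ∘ eqv from rfl,
        Set.range_comp, Set.range_eq_univ.mpr eqv.surjective]
      simp [Set.image_univ, ← Set.image_eq_range]
    rw [hr]
    by_cases hi : i ∈ I
    · exact Submodule.subset_span ⟨i, hi, rfl⟩
    · obtain ⟨a, ha, hmem⟩ := hImax i hi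
      have h2 := Submodule.smul_mem _ a⁻¹ hmem
      rwa [smul_smul, inv_mul_cancel₀ ha, one_smul] at h2
  have key : ∀ i, ((e i).1 - (e i).2) ⬝ᵥ v' = F (e i).1 - F (e i).2 := by
    intro i
    obtain ⟨c, hc⟩ := (Submodule.mem_span_range_iff_exists_fun ℝ).mp (hspan i)
    calc ((e i).1 - (e i).2) ⬝ᵥ v' = L (P (w i)) := by rw [hPw, hdot]
    _ = L (P (∑ k, c k • incVec (f k))) := by rw [hc]
    _ = ∑ k, c k • L (P (incVec (f k))) := by rw [map_sum, map_sum]; simp only [_root_.map_smul]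
    _ = ∑ k, c k • q (incVec (f k)) := by
          refine Finset.sum_congr rfl fun k _ => ?_
          congr 1
          have : P (incVec (f k)) = u k := by
            simp [incVec, hP, hu, Finsupp.linearCombination_single]
          rw [this, hLu]
    _ = q (∑ k, c k • incVec (f k)) := by rw [map_sum]; simp only [_root_.map_smul]
    _ = F (e i).1 - F (e i).2 := by rw [hc, hqw]
  refine ⟨v', fun i => ?_⟩
  have hk := key i
  set x := (e i).1
  set x' := (e i).2
  rw [measurement, measurement, hk, hF]
  dsimp only
  rw [transpose_sub, Matrix.sub_mul, Matrix.sub_mul, trace_sub, trace_sub,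
    Matrix.mul_sub, Matrix.mul_sub, trace_sub, trace_sub, sub_dotProduct]
  ring
end

section
/- For fixed N and d with N ≥ 2, the set of matrices X ∈ ℝ^{N×d} whose rows do not have generic pairwise relations has Lebesgue measure zero. -/
open Matrix MeasureTheory

/-- The points `X 0, …, X (N-1)` in `ℝ^d` have *generic pairwise relations* if for any
acyclic graph on the points with at most `d` distinct edges, the difference vectors
along the edges are linearly independent. -/
def HasGenericPairwiseRelationsRows {N d : ℕ} (X : Fin N → Fin d → ℝ) : Prop :=
  ∀ (m : ℕ) (e : Fin m → Fin N × Fin N),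
    m ≤ d →
    (∀ i, (e i).1 ≠ (e i).2) →
    Function.Injective (fun i => s((e i).1, (e i).2)) →
    (SimpleGraph.fromEdgeSet (Set.range fun i => s((e i).1, (e i).2))).IsAcyclic →
    LinearIndependent ℝ (fun i => X (e i).1 - X (e i).2)

lemma rowsLI_iff_rank {m d : ℕ} (A : Matrix (Fin m) (Fin d) ℝ) :
    LinearIndependent ℝ (fun i => A i) ↔ A.rank = m := by
  rw [Matrix.rank_eq_finrank_span_row, linearIndependent_iff_card_eq_finrank_span]
  simp [Set.finrank, eq_comm]
  rfl

lemma rowsLI_iff_det {m d : ℕ} (A : Matrix (Fin m) (Fin d) ℝ) :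
    LinearIndependent ℝ (fun i => A i) ↔ (A * Aᵀ).det ≠ 0 := by
  rw [rowsLI_iff_rank, ← Matrix.rank_self_mul_transpose,
    ← rowsLI_iff_rank]
  change LinearIndependent ℝ (A * Aᵀ).row ↔ _
  rw [Matrix.linearIndependent_rows_iff_isUnit,
    Matrix.isUnit_iff_isUnit_det, isUnit_iff_ne_zero]

lemma incidence_li {N m : ℕ} (e : Fin m → Fin N × Fin N)
    (hne : ∀ i, (e i).1 ≠ (e i).2)
    (hinj : Function.Injective (fun i => s((e i).1, (e i).2)))
    (hac : (SimpleGraph.fromEdgeSet (Set.range fun i => s((e i).1, (e i).2))).IsAcyclic) :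
    LinearIndependent ℝ (fun i => (Pi.single (e i).1 1 - Pi.single (e i).2 1 : Fin N → ℝ)) := by
  classical
  rw [Fintype.linearIndependent_iff]
  intro c hc i0
  set G := SimpleGraph.fromEdgeSet (Set.range fun i => s((e i).1, (e i).2)) with hG
  set a := (e i0).1
  set b := (e i0).2
  have hadj : G.Adj a b := by
    rw [hG, SimpleGraph.fromEdgeSet_adj]
    exact ⟨⟨i0, rfl⟩, hne i0⟩
  have hbridge := (SimpleGraph.isAcyclic_iff_forall_adj_isBridge.mp hac) hadj
  rw [SimpleGraph.isBridge_iff] at hbridge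
  set G' := G \ SimpleGraph.fromEdgeSet {s(a, b)} with hG'
  have hnr : ¬ G'.Reachable a b := hbridge
  set χ : Fin N → ℝ := fun v => if G'.Reachable a v then 1 else 0 with hχ
  -- pointwise consequence of hc
  have key : ∀ i, c i • (χ (e i).1 - χ (e i).2) = (if i = i0 then c i0 else 0) := by
    intro i
    by_cases hii : i = i0
    · subst hii
      have h1 : χ (e i).1 = 1 := if_pos (SimpleGraph.Reachable.refl a)
      have h2 : χ (e i).2 = 0 := if_neg hnr
      rw [if_pos rfl, h1, h2, sub_zero, smul_eq_mul, mul_one]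
    · -- edge i survives in G'
      have hadji : G'.Adj (e i).1 (e i).2 := by
        rw [hG', SimpleGraph.sdiff_adj]
        constructor
        · rw [hG, SimpleGraph.fromEdgeSet_adj]; exact ⟨⟨i, rfl⟩, hne i⟩
        · rw [SimpleGraph.fromEdgeSet_adj]
          rintro ⟨hmem, -⟩
          exact hii (hinj (hmem : s((e i).1, (e i).2) = s(a, b)))
      have : G'.Reachable a (e i).1 ↔ G'.Reachable a (e i).2 :=
        ⟨fun h => h.trans hadji.reachable, fun h => h.trans hadji.symm.reachable⟩
      have hχeq : χ (e i).1 = χ (e i).2 := by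
        simp only [hχ]
        by_cases h : G'.Reachable a (e i).1
        · rw [if_pos h, if_pos (this.mp h)]
        · rw [if_neg h, if_neg (fun h2 => h (this.mpr h2))]
      rw [if_neg hii, hχeq, sub_self, smul_zero]
  -- sum against χ
  have hsum : ∑ i, c i • (χ (e i).1 - χ (e i).2) = 0 := by
    have h0 := congrArg (fun f : Fin N → ℝ => ∑ v, χ v * f v) hc
    simp only [Finset.sum_apply, Pi.smul_apply, Pi.sub_apply, Pi.zero_apply, smul_eq_mul,
      Finset.mul_sum, mul_zero, Finset.sum_const_zero] at h0
    rw [Finset.sum_comm] at h0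
    rw [← h0]
    refine Finset.sum_congr rfl fun i _ => ?_
    simp only [smul_eq_mul, Pi.single_apply, mul_sub, mul_ite, mul_one, mul_zero,
      Finset.sum_sub_distrib, Finset.sum_ite_eq', Finset.mem_univ, if_true]
    ring
  rw [Finset.sum_congr rfl (fun i _ => key i)] at hsum
  simpa using hsum

open MvPolynomial in
lemma mvpoly_null_fin : ∀ (n : ℕ) (p : MvPolynomial (Fin n) ℝ), p ≠ 0 →
    volume {x : Fin n → ℝ | MvPolynomial.eval x p = 0} = 0 := by
  intro n
  induction n with
  | zero =>
    intro p hp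
    have : {x : Fin 0 → ℝ | MvPolynomial.eval x p = 0} = ∅ := by
      ext x
      simp only [Set.mem_setOf_eq, Set.mem_empty_iff_false, iff_false]
      rw [eq_C_of_isEmpty p]
      simp only [eval_C]
      intro h
      apply hp
      rw [eq_C_of_isEmpty p, h, map_zero]
    rw [this, measure_empty]
  | succ n ih =>
    intro p hp
    set q := finSuccEquiv ℝ n p with hqdef
    have hq0 : q ≠ 0 := by
      intro h
      exact hp ((map_eq_zero_iff _ (AlgEquiv.injective _)).mp h)
    obtain ⟨k, hk⟩ : ∃ k, q.coeff k ≠ 0 := by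
      by_contra h
      push_neg at h
      exact hq0 (Polynomial.ext h)
    -- the target set in the product space
    set T : Set ((Fin n → ℝ) × ℝ) :=
      {z | Polynomial.eval z.2 (Polynomial.map (MvPolynomial.eval z.1) q) = 0} with hT
    have hTmeas : MeasurableSet T := by
      have hcont : Continuous (fun z : (Fin n → ℝ) × ℝ =>
          ∑ k ∈ Finset.range (q.natDegree + 1), MvPolynomial.eval z.1 (q.coeff k) * z.2 ^ k) := by
        refine continuous_finset_sum _ fun k _ => ?_
        exact ((MvPolynomial.continuous_eval _).comp continuous_fst).mul
          ((continuous_pow k).comp continuous_snd)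
      have heq : T = (fun z : (Fin n → ℝ) × ℝ =>
          ∑ k ∈ Finset.range (q.natDegree + 1), MvPolynomial.eval z.1 (q.coeff k) * z.2 ^ k) ⁻¹' {0} := by
        ext z
        simp only [hT, Set.mem_setOf_eq, Set.mem_preimage, Set.mem_singleton_iff]
        rw [Polynomial.eval_eq_sum_range' (n := q.natDegree + 1) (lt_of_le_of_lt
          Polynomial.natDegree_map_le (Nat.lt_succ_self _))]
        simp [Polynomial.coeff_map]
      rw [heq]
      exact hcont.measurable (measurableSet_singleton 0)
    have hTnull : (volume : Measure (Fin n → ℝ)).prod (volume : Measure ℝ) T = 0 := by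
      rw [MeasureTheory.Measure.measure_prod_null hTmeas]
      have hae : ∀ᵐ y : (Fin n → ℝ), MvPolynomial.eval y (q.coeff k) ≠ 0 := by
        rw [ae_iff]
        push_neg
        exact ih _ hk
      filter_upwards [hae] with y hy
      simp only [Pi.zero_apply]
      have hqy : Polynomial.map (MvPolynomial.eval y) q ≠ 0 := by
        intro h
        apply hy
        rw [← Polynomial.coeff_map, h, Polynomial.coeff_zero]
      have : {t : ℝ | (y, t) ∈ T} = {t | (Polynomial.map (MvPolynomial.eval y) q).IsRoot t} := rfl
      rw [show (Prod.mk y ⁻¹' T) = {t | (Polynomial.map (MvPolynomial.eval y) q).IsRoot t} from rfl]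
      exact Set.Finite.measure_zero (Polynomial.finite_setOf_isRoot hqy) _
    -- transfer back
    have hmp : MeasurePreserving
        (fun x : Fin (n+1) → ℝ => ((fun j : Fin n => x j.succ), x 0))
        volume ((volume : Measure (Fin n → ℝ)).prod (volume : Measure ℝ)) := by
      have h1 := (measurePreserving_piFinSuccAbove (fun _ : Fin (n+1) => (volume : Measure ℝ)) 0)
      have h2 := (MeasureTheory.Measure.measurePreserving_swap (μ := (volume : Measure ℝ))
        (ν := (volume : Measure (Fin n → ℝ))))
      have := h2.comp h1
      convert this using 1
      rfl
      · funext x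
        simp [MeasurableEquiv.piFinSuccAbove_apply]
        rfl
      rfl
    have hset : {x : Fin (n+1) → ℝ | MvPolynomial.eval x p = 0} =
        (fun x : Fin (n+1) → ℝ => ((fun j : Fin n => x j.succ), x 0)) ⁻¹' T := by
      ext x
      simp only [Set.mem_setOf_eq, Set.mem_preimage, hT]
      rw [show x = Fin.cons (x 0) (fun j => x j.succ) from (Fin.cons_self_tail x).symm]
      rw [eval_eq_eval_mv_eval']
      simp [Fin.cons_zero, Fin.cons_succ]
      rw [← hqdef]
    rw [hset, hmp.measure_preimage hTmeas.nullMeasurableSet]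
    exact hTnull

open MvPolynomial in
lemma mvpoly_null {σ : Type*} [Fintype σ] (p : MvPolynomial σ ℝ) (hp : p ≠ 0) :
    volume {x : σ → ℝ | MvPolynomial.eval x p = 0} = 0 := by
  classical
  set ε := Fintype.equivFin σ with hε
  set p' := MvPolynomial.rename ε p with hp'
  have hp'0 : p' ≠ 0 := fun h => hp ((MvPolynomial.rename_injective ε ε.injective).eq_iff.mp
    (by rw [← hp', h, map_zero]))
  have hS : MeasurableSet {x : σ → ℝ | MvPolynomial.eval x p = 0} :=
    (MvPolynomial.continuous_eval p).measurable (measurableSet_singleton 0)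
  have hmp := MeasureTheory.volume_measurePreserving_piCongrLeft (fun _ : σ => ℝ) ε.symm
  have hpre : (MeasurableEquiv.piCongrLeft (fun _ : σ => ℝ) ε.symm) ⁻¹'
      {x : σ → ℝ | MvPolynomial.eval x p = 0}
      = {y : Fin (Fintype.card σ) → ℝ | MvPolynomial.eval y p' = 0} := by
    ext y
    simp only [Set.mem_preimage, Set.mem_setOf_eq, hp', MvPolynomial.eval_rename]
    have : (MeasurableEquiv.piCongrLeft (fun _ : σ => ℝ) ε.symm) y = fun s => y (ε s) := by
      funext s
      have h := Equiv.piCongrLeft_apply_apply (fun _ : σ => ℝ) ε.symm y (ε s)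
      have h2 : (MeasurableEquiv.piCongrLeft (fun _ : σ => ℝ) ε.symm) y
          = (Equiv.piCongrLeft (fun _ : σ => ℝ) ε.symm) y := rfl
      rw [h2]
      convert h using 2
      simp
    rw [this]
    rfl
  rw [← hmp.measure_preimage hS.nullMeasurableSet, hpre]
  exact mvpoly_null_fin _ p' hp'0

lemma uncurry_mp : ∀ (N d : ℕ), MeasurePreserving
    (fun (X : Fin N → Fin d → ℝ) (q : Fin N × Fin d) => X q.1 q.2)
    volume volume := by
  intro N
  induction N with
  | zero =>
    intro d
    constructor
    · exact measurable_pi_lambda _ fun q => q.1.elim0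
    · have h1 : (volume : Measure (Fin 0 → Fin d → ℝ)) = Measure.dirac (fun i => i.elim0) := by
        rw [show (volume : Measure (Fin 0 → Fin d → ℝ)) = Measure.pi (fun _ => volume) from rfl,
          Measure.pi_of_empty]
        congr
      have h2 : (volume : Measure (Fin 0 × Fin d → ℝ)) = Measure.dirac (fun q => q.1.elim0) := by
        rw [show (volume : Measure (Fin 0 × Fin d → ℝ)) = Measure.pi (fun _ => volume) from rfl,
          Measure.pi_of_empty]
        congr
      rw [h1, h2, Measure.map_dirac' (measurable_pi_lambda _ fun (q : Fin 0 × Fin d) => q.1.elim0)]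
      congr
      funext q
      exact q.1.elim0
  | succ n ih =>
    intro d
    -- chain of measure preserving maps
    have hA := MeasureTheory.measurePreserving_piFinSuccAbove
      (fun _ : Fin (n+1) => (volume : Measure (Fin d → ℝ))) 0
    have hB : MeasurePreserving
        (Prod.map (id : (Fin d → ℝ) → (Fin d → ℝ))
          (fun (X : Fin n → Fin d → ℝ) (q : Fin n × Fin d) => X q.1 q.2))
        ((volume : Measure (Fin d → ℝ)).prod (volume : Measure (Fin n → Fin d → ℝ)))
        ((volume : Measure (Fin d → ℝ)).prod (volume : Measure (Fin n × Fin d → ℝ))) :=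
      (MeasurePreserving.id _).prod (ih d)
    have hC := (MeasureTheory.measurePreserving_sumPiEquivProdPi
      (fun _ : Fin d ⊕ (Fin n × Fin d) => (volume : Measure ℝ))).symm
    set φ : (Fin d ⊕ (Fin n × Fin d)) ≃ (Fin (n+1) × Fin d) :=
      { toFun := fun x => Sum.elim (fun j => ((0 : Fin (n+1)), j)) (fun p => (p.1.succ, p.2)) x
        invFun := fun q => Fin.cases (Sum.inl q.2) (fun i => Sum.inr (i, q.2)) q.1
        left_inv := by rintro (j | ⟨i, j⟩) <;> simp
        right_inv := by
          rintro ⟨i, j⟩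
          induction i using Fin.cases <;> simp } with hφ
    have hD := MeasureTheory.volume_measurePreserving_piCongrLeft (fun _ : Fin (n+1) × Fin d => ℝ) φ
    have hchain := (hD.comp hC).comp (hB.comp hA)
    convert hchain using 1
    rfl
    funext X
    funext q
    show X q.1 q.2 = _
    simp only [Function.comp_apply]
    rcases q with ⟨i, j⟩
    induction i using Fin.cases with
    | zero => rfl
    | succ i => rfl
    rfl

lemma bad_null {N d m : ℕ} (e : Fin m → Fin N × Fin N) (hmd : m ≤ d)
    (hne : ∀ i, (e i).1 ≠ (e i).2)
    (hinj : Function.Injective (fun i => s((e i).1, (e i).2)))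
    (hac : (SimpleGraph.fromEdgeSet (Set.range fun i => s((e i).1, (e i).2))).IsAcyclic) :
    volume {X : Fin N → Fin d → ℝ |
      ¬ LinearIndependent ℝ (fun i => X (e i).1 - X (e i).2)} = 0 := by
  classical
  set M : Matrix (Fin m) (Fin d) (MvPolynomial (Fin N × Fin d) ℝ) :=
    Matrix.of (fun i j => MvPolynomial.X ((e i).1, j) - MvPolynomial.X ((e i).2, j)) with hM
  set p : MvPolynomial (Fin N × Fin d) ℝ := (M * Mᵀ).det with hp
  have heval : ∀ x : Fin N × Fin d → ℝ, MvPolynomial.eval x p =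
      ((Matrix.of fun i j => x ((e i).1, j) - x ((e i).2, j)) *
        (Matrix.of fun i j => x ((e i).1, j) - x ((e i).2, j))ᵀ).det := by
    intro x
    rw [hp, RingHom.map_det]
    congr 1
    rw [RingHom.mapMatrix_apply, Matrix.map_mul]
    congr 1 <;> ext i j <;> simp [hM, RingHom.mapMatrix_apply]
  -- the good point
  set V : Matrix (Fin m) (Fin N) ℝ :=
    Matrix.of (fun i => (Pi.single (e i).1 1 - Pi.single (e i).2 1 : Fin N → ℝ)) with hV
  have hVli : LinearIndependent ℝ (fun i => V i) := incidence_li e hne hinj hac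
  have hVdet : (V * Vᵀ).det ≠ 0 := (rowsLI_iff_det V).mp hVli
  set E : Matrix (Fin m) (Fin d) ℝ := Matrix.of fun i j => if (i : ℕ) = (j : ℕ) then 1 else 0
    with hE
  set X0 : Matrix (Fin N) (Fin d) ℝ := Vᵀ * (V * Vᵀ)⁻¹ * E with hX0
  have hVX0 : V * X0 = E := by
    rw [hX0, ← Matrix.mul_assoc, ← Matrix.mul_assoc, Matrix.mul_nonsing_inv _
      (isUnit_iff_ne_zero.mpr hVdet), Matrix.one_mul]
  have hErows : LinearIndependent ℝ (fun i => E i) := by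
    have h1 : LinearIndependent ℝ (fun i : Fin d => (1 : Matrix (Fin d) (Fin d) ℝ) i) :=
      Matrix.linearIndependent_rows_iff_isUnit.mpr isUnit_one
    have h2 := h1.comp (Fin.castLE hmd) (Fin.castLE_injective hmd)
    have h3 : (fun i : Fin m => E i)
        = fun i : Fin m => (1 : Matrix (Fin d) (Fin d) ℝ) (Fin.castLE hmd i) := by
      funext i j
      show (if (i : ℕ) = (j : ℕ) then (1:ℝ) else 0)
        = (1 : Matrix (Fin d) (Fin d) ℝ) (Fin.castLE hmd i) j
      rw [Matrix.one_apply]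
      congr 1
      simp [Fin.ext_iff, eq_comm]
    rw [h3]
    exact h2
  have hp0 : p ≠ 0 := by
    intro h0
    set x0 : Fin N × Fin d → ℝ := fun q => X0 q.1 q.2 with hx0
    have h1 := heval x0
    have hA : (Matrix.of fun i j => x0 ((e i).1, j) - x0 ((e i).2, j)) = V * X0 := by
      ext i j
      rw [Matrix.mul_apply]
      simp only [hx0, hV, Matrix.of_apply, Pi.sub_apply, Pi.single_apply, sub_mul, ite_mul,
        one_mul, zero_mul, Finset.sum_sub_distrib, Finset.sum_ite_eq, Finset.sum_ite_eq',
        Finset.mem_univ, if_true]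
    rw [hA, hVX0, h0, map_zero] at h1
    exact (rowsLI_iff_det E).mp hErows h1.symm
  have hZmeas : MeasurableSet {x : Fin N × Fin d → ℝ | MvPolynomial.eval x p = 0} :=
    (MvPolynomial.continuous_eval p).measurable (measurableSet_singleton 0)
  refine measure_mono_null (t := (fun (X : Fin N → Fin d → ℝ) (q : Fin N × Fin d) => X q.1 q.2)
      ⁻¹' {x | MvPolynomial.eval x p = 0}) (fun X hX => ?_) ?_
  · simp only [Set.mem_preimage, Set.mem_setOf_eq]
    rw [heval]
    by_contra hdet
    exact hX ((rowsLI_iff_det (Matrix.of fun i j => X (e i).1 j - X (e i).2 j)).mpr hdet)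
  · rw [(uncurry_mp N d).measure_preimage hZmeas.nullMeasurableSet]
    exact mvpoly_null p hp0

/-- Almost every `N`-tuple of points in `ℝ^d` has generic pairwise relations: the set of
exceptions has Lebesgue measure zero. -/
theorem generic_pairwise_relations_ae
    (N d : ℕ) (hN : 2 ≤ N) :
    volume {X : Fin N → Fin d → ℝ | ¬ HasGenericPairwiseRelationsRows X} = 0 := by
  classical
  have hsub : {X : Fin N → Fin d → ℝ | ¬ HasGenericPairwiseRelationsRows X} ⊆
      ⋃ (m : Fin (d+1)), ⋃ (e : Fin (m : ℕ) → Fin N × Fin N),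
        {X : Fin N → Fin d → ℝ |
          ((∀ i, (e i).1 ≠ (e i).2) ∧
            Function.Injective (fun i => s((e i).1, (e i).2)) ∧
            (SimpleGraph.fromEdgeSet (Set.range fun i => s((e i).1, (e i).2))).IsAcyclic) ∧
          ¬ LinearIndependent ℝ (fun i => X (e i).1 - X (e i).2)} := by
    intro X hX
    simp only [Set.mem_setOf_eq, HasGenericPairwiseRelationsRows] at hX
    push_neg at hX
    obtain ⟨m, e, hmd, hne, hinj, hac, hli⟩ := hX
    exact Set.mem_iUnion.mpr ⟨⟨m, Nat.lt_succ_of_le hmd⟩,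
      Set.mem_iUnion.mpr ⟨e, ⟨⟨hne, hinj, hac⟩, hli⟩⟩⟩
  refine measure_mono_null hsub ?_
  refine measure_iUnion_null fun m => measure_iUnion_null fun e => ?_
  by_cases h : (∀ i, (e i).1 ≠ (e i).2) ∧
      Function.Injective (fun i => s((e i).1, (e i).2)) ∧
      (SimpleGraph.fromEdgeSet (Set.range fun i => s((e i).1, (e i).2))).IsAcyclic
  · obtain ⟨h1, h2, h3⟩ := h
    exact measure_mono_null (fun X hX => hX.2) (bad_null e (Nat.lt_succ_iff.mp m.2) h1 h2 h3)
  · have : {X : Fin N → Fin d → ℝ |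
        ((∀ i, (e i).1 ≠ (e i).2) ∧
          Function.Injective (fun i => s((e i).1, (e i).2)) ∧
          (SimpleGraph.fromEdgeSet (Set.range fun i => s((e i).1, (e i).2))).IsAcyclic) ∧
        ¬ LinearIndependent ℝ (fun i => X (e i).1 - X (e i).2)} = ∅ := by
      ext X
      simp only [Set.mem_setOf_eq, Set.mem_empty_iff_false, iff_false]
      exact fun hX => h hX.1
    rw [this, measure_empty]
end

section
/- Let V ⊆ ℝ^d be an r-dimensional subspace with orthonormal basis given by B ∈ ℝ^{d×r}. Fix a positive definite M ∈ ℝ^{d×d}, items x, x' ∈ V, and an ideal point u ∈ ℝ^d. Let Q = BᵀMB, x_V = Bᵀx, x'_V = Bᵀx', and suppose u_V ∈ ℝ^r satisfies (BᵀMB)u_V = BᵀMu. Then ‖x - u‖²_M - ‖x' - u‖²_M = ‖x_V - u_V‖²_Q - ‖x'_V - u_V‖²_Q, where ‖z‖²_A = zᵀAz. -/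
open Matrix

/-- Phantom ideal point lemma: for items `x, x'` in the subspace `V` (with orthonormal
basis `B`), the preference measurement under `(M, u)` in `ℝ^d` equals the measurement
under `(Q, u_V)` in `ℝ^r`, where `Q = BᵀMB` and `(BᵀMB) u_V = BᵀMu`. -/
theorem phantom_ideal_point
    (d r : ℕ) (B : Matrix (Fin d) (Fin r) ℝ) (hB : Bᵀ * B = 1)
    (M : Matrix (Fin d) (Fin d) ℝ) (hM : M.PosDef)
    (x x' u : Fin d → ℝ)
    -- `x, x' ∈ V`: they are fixed by the projection `BBᵀ`
    (hx : B *ᵥ (Bᵀ *ᵥ x) = x) (hx' : B *ᵥ (Bᵀ *ᵥ x') = x')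
    (uV : Fin r → ℝ) (huV : (Bᵀ * M * B) *ᵥ uV = Bᵀ *ᵥ (M *ᵥ u)) :
    (x - u) ⬝ᵥ (M *ᵥ (x - u)) - (x' - u) ⬝ᵥ (M *ᵥ (x' - u)) =
      (Bᵀ *ᵥ x - uV) ⬝ᵥ ((Bᵀ * M * B) *ᵥ (Bᵀ *ᵥ x - uV)) -
        (Bᵀ *ᵥ x' - uV) ⬝ᵥ ((Bᵀ * M * B) *ᵥ (Bᵀ *ᵥ x' - uV)) := by
  have hMs : Mᵀ = M := by
    simpa [Matrix.IsHermitian, Matrix.conjTranspose_eq_transpose_of_trivial] using hM.isHermitian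
  have hQs : (Bᵀ * M * B)ᵀ = Bᵀ * M * B := by
    rw [transpose_mul, transpose_mul, transpose_transpose, hMs, Matrix.mul_assoc]
  have swap : ∀ (a : Fin r → ℝ) (w : Fin d → ℝ), a ⬝ᵥ (Bᵀ *ᵥ w) = (B *ᵥ a) ⬝ᵥ w := by
    intro a w; rw [dotProduct_mulVec, vecMul_transpose]
  have key : ∀ v : Fin d → ℝ, B *ᵥ (Bᵀ *ᵥ v) = v →
      (v - u) ⬝ᵥ (M *ᵥ (v - u)) - (Bᵀ *ᵥ v - uV) ⬝ᵥ ((Bᵀ * M * B) *ᵥ (Bᵀ *ᵥ v - uV))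
        = u ⬝ᵥ (M *ᵥ u) - uV ⬝ᵥ ((Bᵀ * M * B) *ᵥ uV) := by
    intro v hv
    have eQx : (Bᵀ * M * B) *ᵥ (Bᵀ *ᵥ v) = Bᵀ *ᵥ (M *ᵥ v) := by
      rw [← mulVec_mulVec, ← mulVec_mulVec, hv]
    have e1 : (Bᵀ *ᵥ v) ⬝ᵥ ((Bᵀ * M * B) *ᵥ (Bᵀ *ᵥ v)) = v ⬝ᵥ (M *ᵥ v) := by
      rw [eQx, swap, hv]
    have e2 : (Bᵀ *ᵥ v) ⬝ᵥ ((Bᵀ * M * B) *ᵥ uV) = v ⬝ᵥ (M *ᵥ u) := by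
      rw [huV, swap, hv]
    have e3 : uV ⬝ᵥ ((Bᵀ * M * B) *ᵥ (Bᵀ *ᵥ v)) = v ⬝ᵥ (M *ᵥ u) := by
      rw [dotProduct_mulVec, ← mulVec_transpose, hQs, huV, dotProduct_comm, swap, hv]
    have e4 : u ⬝ᵥ (M *ᵥ v) = v ⬝ᵥ (M *ᵥ u) := by
      rw [dotProduct_mulVec, ← mulVec_transpose, hMs, dotProduct_comm]
    rw [mulVec_sub, sub_dotProduct, dotProduct_sub, dotProduct_sub,
        mulVec_sub, sub_dotProduct, dotProduct_sub, dotProduct_sub,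
        e1, e2, e3, e4]
    ring
  have h1 := key x hx
  have h2 := key x' hx'
  linarith
end

section
/- Let X ⊂ V be a set of items in an r-dimensional subspace V of ℝ^d with orthonormal basis B. Suppose X does not quadratically span V: there exists a nonzero pair (Q_⊥, v_⊥) ∈ Sym(ℝ^r) ⊕ ℝ^r orthogonal to all vectors (x_V x_Vᵀ - x'_V x'_Vᵀ) ⊕ (x - x') for x, x' ∈ X (where x_V = Bᵀx). Then for any positive definite M consistent with a set of unquantized user responses, the matrices M + λ·BQ_⊥Bᵀ for 0 ≤ λ < σ_min(M)/σ_max(BQ_⊥Bᵀ) are all positive definite and also consistent with the responses (with appropriately shifted pseudo-ideal points); in particular infinitely many Mahalanobis distances are consistent. -/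
open Matrix

/-- The least Rayleigh quotient of `M`; for symmetric positive definite `M` this is the
least eigenvalue `σ_min(M)`. -/
noncomputable def rayleighMin {d : ℕ} (M : Matrix (Fin d) (Fin d) ℝ) : ℝ :=
  sInf {c : ℝ | ∃ z : Fin d → ℝ, z ⬝ᵥ z = 1 ∧ c = z ⬝ᵥ (M *ᵥ z)}

/-- The largest absolute Rayleigh quotient of `A`; for symmetric `A` this is the
largest singular value `σ_max(A)`. -/
noncomputable def rayleighMax {d : ℕ} (A : Matrix (Fin d) (Fin d) ℝ) : ℝ :=
  sSup {c : ℝ | ∃ z : Fin d → ℝ, z ⬝ᵥ z = 1 ∧ c = |z ⬝ᵥ (A *ᵥ z)|}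

lemma trace_vecMulVec_mul {d : ℕ} (x : Fin d → ℝ) (N : Matrix (Fin d) (Fin d) ℝ) :
    Matrix.trace ((vecMulVec x x)ᵀ * N) = x ⬝ᵥ (N *ᵥ x) := by
  simp only [Matrix.trace, Matrix.diag, Matrix.mul_apply, Matrix.transpose_apply,
    Matrix.vecMulVec_apply, dotProduct, Matrix.mulVec, Finset.mul_sum]
  rw [Finset.sum_comm]
  exact Finset.sum_congr rfl fun i _ => Finset.sum_congr rfl fun j _ => by ring

lemma dotProduct_self_pos {d : ℕ} {x : Fin d → ℝ} (hx : x ≠ 0) : 0 < x ⬝ᵥ x := by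
  have h : x ⬝ᵥ x ≠ 0 := fun h => hx (dotProduct_self_eq_zero.mp h)
  exact lt_of_le_of_ne (Finset.sum_nonneg fun i _ => mul_self_nonneg _) (Ne.symm h)

lemma rayleighMin_le {d : ℕ} (M : Matrix (Fin d) (Fin d) ℝ) (hM : M.PosDef)
    {z : Fin d → ℝ} (hz : z ⬝ᵥ z = 1) : rayleighMin M ≤ z ⬝ᵥ (M *ᵥ z) := by
  apply csInf_le
  · refine ⟨0, ?_⟩
    rintro c ⟨w, hw, rfl⟩
    have hw0 : w ≠ 0 := fun h => by simp [h] at hw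
    have := (Matrix.posDef_iff_dotProduct_mulVec.mp hM).2 hw0
    simpa using this.le
  · exact ⟨z, hz, rfl⟩

lemma rayleighMin_nonneg {d : ℕ} (M : Matrix (Fin d) (Fin d) ℝ) (hM : M.PosDef) :
    0 ≤ rayleighMin M := by
  rcases Set.eq_empty_or_nonempty {c : ℝ | ∃ z : Fin d → ℝ, z ⬝ᵥ z = 1 ∧ c = z ⬝ᵥ (M *ᵥ z)} with h | h
  · simp [rayleighMin, h, Real.sInf_empty]
  · apply le_csInf h
    rintro c ⟨w, hw, rfl⟩
    have hw0 : w ≠ 0 := fun h => by simp [h] at hw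
    have := (Matrix.posDef_iff_dotProduct_mulVec.mp hM).2 hw0
    simpa using this.le

lemma le_rayleighMax {d : ℕ} (A : Matrix (Fin d) (Fin d) ℝ)
    {z : Fin d → ℝ} (hz : z ⬝ᵥ z = 1) : |z ⬝ᵥ (A *ᵥ z)| ≤ rayleighMax A := by
  apply le_csSup
  · refine ⟨∑ i, ∑ j, |A i j|, ?_⟩
    rintro c ⟨w, hw, rfl⟩
    have hwb : ∀ i, |w i| ≤ 1 := by
      intro i
      have h1 : w i * w i ≤ w ⬝ᵥ w := by
        rw [dotProduct]
        exact Finset.single_le_sum (f := fun j => w j * w j)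
          (fun j _ => mul_self_nonneg _) (Finset.mem_univ i)
      rw [hw] at h1
      nlinarith [abs_nonneg (w i), sq_abs (w i)]
    calc |w ⬝ᵥ (A *ᵥ w)| ≤ ∑ i, |w i * (A *ᵥ w) i| := Finset.abs_sum_le_sum_abs _ _
      _ ≤ ∑ i, ∑ j, |A i j| := by
          apply Finset.sum_le_sum
          intro i _
          rw [abs_mul, mulVec, dotProduct]
          calc |w i| * |∑ j, A i j * w j| ≤ 1 * ∑ j, |A i j * w j| :=
                mul_le_mul (hwb i) (Finset.abs_sum_le_sum_abs _ _) (abs_nonneg _)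
                  zero_le_one
            _ = ∑ j, |A i j| * |w j| := by simp [abs_mul]
            _ ≤ ∑ j, |A i j| * 1 := Finset.sum_le_sum fun j _ =>
                mul_le_mul_of_nonneg_left (hwb j) (abs_nonneg _)
            _ = ∑ j, |A i j| := by simp
  · exact ⟨z, hz, rfl⟩

/-- Non-identifiability when the items fail to quadratically span the subspace `V`
(with orthonormal basis `B`): if `(Q⊥, v⊥) ≠ 0` is orthogonal to all measurement
vectors of item pairs from `X ⊆ V`, and `(M, (v_k)_k)` is consistent with the recorded
unquantized responses `ψ`, then for every `0 ≤ λ < σ_min(M)/σ_max(BQ⊥Bᵀ)` the matrix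
`M + λ·BQ⊥Bᵀ` is positive definite and also consistent (with shifted pseudo-ideal
points). -/
theorem non_identifiability_without_quadratic_span
    (d r : ℕ) (B : Matrix (Fin d) (Fin r) ℝ) (hB : Bᵀ * B = 1)
    (X : Set (Fin d → ℝ)) (hXV : ∀ x ∈ X, ∃ z : Fin r → ℝ, x = B *ᵥ z)
    -- failure of quadratic spanning: a nonzero element orthogonal to all item pairs
    (Qp : Matrix (Fin r) (Fin r) ℝ) (vp : Fin r → ℝ)
    (hQp : Qpᵀ = Qp) (hnz : ¬ (Qp = 0 ∧ vp = 0))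
    (horth : ∀ x ∈ X, ∀ x' ∈ X,
      Matrix.trace ((vecMulVec (Bᵀ *ᵥ x) (Bᵀ *ᵥ x) -
          vecMulVec (Bᵀ *ᵥ x') (Bᵀ *ᵥ x'))ᵀ * Qp) + (x - x') ⬝ᵥ (B *ᵥ vp) = 0)
    -- the recorded data: `K` users, `m` comparisons each, over items in `X`
    (K m : ℕ) (pairs : Fin K → Fin m → (Fin d → ℝ) × (Fin d → ℝ))
    (hpairs : ∀ k i, (pairs k i).1 ∈ X ∧ (pairs k i).2 ∈ X)
    (ψ : Fin K → Fin m → ℝ)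
    -- a consistent positive-definite metric with pseudo-ideal points
    (M : Matrix (Fin d) (Fin d) ℝ) (hM : M.PosDef) (v : Fin K → Fin d → ℝ)
    (hcons : ∀ k i, measurement (pairs k i).1 (pairs k i).2 M (v k) = ψ k i) :
    ∀ lam : ℝ, 0 ≤ lam → lam < rayleighMin M / rayleighMax (B * Qp * Bᵀ) →
      (M + lam • (B * Qp * Bᵀ)).PosDef ∧
      ∃ v' : Fin K → Fin d → ℝ, ∀ k i,
        measurement (pairs k i).1 (pairs k i).2 (M + lam • (B * Qp * Bᵀ)) (v' k) =
          ψ k i := by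
  intro lam hlam0 hlamlt
  set A := B * Qp * Bᵀ with hA
  -- symmetry of A
  have hAsym : Aᵀ = A := by
    rw [hA, Matrix.transpose_mul, Matrix.transpose_mul, Matrix.transpose_transpose, hQp,
      Matrix.mul_assoc]
  -- key positivity bound
  have hquad : ∀ x : Fin d → ℝ, x ≠ 0 → 0 < x ⬝ᵥ ((M + lam • A) *ᵥ x) := by
    intro x hx
    have hunit : ∀ z : Fin d → ℝ, z ⬝ᵥ z = 1 → 0 < z ⬝ᵥ ((M + lam • A) *ᵥ z) := by
      intro z hz
      have h1 : rayleighMin M ≤ z ⬝ᵥ (M *ᵥ z) := rayleighMin_le M hM hz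
      have h2 : |z ⬝ᵥ (A *ᵥ z)| ≤ rayleighMax A := le_rayleighMax A hz
      have hpos : 0 < rayleighMin M / rayleighMax A := lt_of_le_of_lt hlam0 hlamlt
      have hRmaxpos : 0 < rayleighMax A := by
        rcases div_pos_iff.mp hpos with ⟨_, h⟩ | ⟨h, _⟩
        · exact h
        · linarith [rayleighMin_nonneg M hM]
      have hlamRmax : lam * rayleighMax A < rayleighMin M :=
        (lt_div_iff₀ hRmaxpos).mp hlamlt
      have h3 : -(lam * rayleighMax A) ≤ lam * (z ⬝ᵥ (A *ᵥ z)) := by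
        have := (abs_le.mp h2).1
        nlinarith
      have : 0 < z ⬝ᵥ (M *ᵥ z) + lam * (z ⬝ᵥ (A *ᵥ z)) := by linarith
      calc (0:ℝ) < z ⬝ᵥ (M *ᵥ z) + lam * (z ⬝ᵥ (A *ᵥ z)) := this
        _ = z ⬝ᵥ ((M + lam • A) *ᵥ z) := by
            rw [Matrix.add_mulVec, dotProduct_add, Matrix.smul_mulVec,
              dotProduct_smul]
            simp
    -- scale x to unit
    have hxx : 0 < x ⬝ᵥ x := dotProduct_self_pos hx
    set c := Real.sqrt (x ⬝ᵥ x) with hc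
    have hcpos : 0 < c := Real.sqrt_pos.mpr hxx
    have hcsq : c * c = x ⬝ᵥ x := Real.mul_self_sqrt hxx.le
    set z := c⁻¹ • x with hzdef
    have hz1 : z ⬝ᵥ z = 1 := by
      rw [hzdef, smul_dotProduct, dotProduct_smul, smul_eq_mul, smul_eq_mul, ← hcsq]
      field_simp
    have := hunit z hz1
    have hexp : z ⬝ᵥ ((M + lam • A) *ᵥ z) = (c⁻¹ * c⁻¹) * (x ⬝ᵥ ((M + lam • A) *ᵥ x)) := by
      rw [hzdef, smul_dotProduct, Matrix.mulVec_smul, dotProduct_smul]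
      ring_nf
    rw [hexp] at this
    nlinarith [mul_pos (inv_pos.mpr hcpos) (inv_pos.mpr hcpos)]
  constructor
  · refine Matrix.posDef_iff_dotProduct_mulVec.mpr ⟨?_, ?_⟩
    · show (M + lam • A)ᴴ = M + lam • A
      have hMe : ∀ i j, M j i = M i j := fun i j => by
        have := congrFun (congrFun hM.1 i) j
        simpa [Matrix.conjTranspose_apply] using this
      have hAe : ∀ i j, A j i = A i j := fun i j => by
        have := congrFun (congrFun hAsym i) j
        simpa [Matrix.transpose_apply] using this
      ext i j
      simp only [Matrix.conjTranspose_apply, Matrix.add_apply, Matrix.smul_apply,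
        smul_eq_mul, star_trivial]
      rw [hMe i j, hAe i j]
    · intro x hx
      simpa using hquad x hx
  · refine ⟨fun k => v k + lam • (B *ᵥ vp), fun k i => ?_⟩
    obtain ⟨h1, h2⟩ := hpairs k i
    set x := (pairs k i).1
    set x' := (pairs k i).2
    have key := horth x h1 x' h2
    -- rewrite traces
    have ht : ∀ y : Fin d → ℝ, Matrix.trace ((vecMulVec (Bᵀ *ᵥ y) (Bᵀ *ᵥ y))ᵀ * Qp)
        = Matrix.trace ((vecMulVec y y)ᵀ * A) := by
      intro y
      rw [trace_vecMulVec_mul, trace_vecMulVec_mul, hA,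
        ← Matrix.mulVec_mulVec, ← Matrix.mulVec_mulVec,
        Matrix.dotProduct_mulVec y B, Matrix.mulVec_transpose]
    have hsubtr : Matrix.trace ((vecMulVec x x - vecMulVec x' x')ᵀ * A)
        = -((x - x') ⬝ᵥ (B *ᵥ vp)) := by
      have e1 : Matrix.trace ((vecMulVec x x - vecMulVec x' x')ᵀ * A)
          = Matrix.trace ((vecMulVec x x)ᵀ * A) - Matrix.trace ((vecMulVec x' x')ᵀ * A) := by
        rw [Matrix.transpose_sub, Matrix.sub_mul, Matrix.trace_sub]
      have e2 : Matrix.trace ((vecMulVec (Bᵀ *ᵥ x) (Bᵀ *ᵥ x) -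
          vecMulVec (Bᵀ *ᵥ x') (Bᵀ *ᵥ x'))ᵀ * Qp)
          = Matrix.trace ((vecMulVec x x)ᵀ * A) - Matrix.trace ((vecMulVec x' x')ᵀ * A) := by
        rw [Matrix.transpose_sub, Matrix.sub_mul, Matrix.trace_sub, ht x, ht x']
      rw [e1, ← e2]
      linarith [key]
    have hexp : measurement x x' (M + lam • A) (v k + lam • (B *ᵥ vp))
        = measurement x x' M (v k)
          + lam * Matrix.trace ((vecMulVec x x - vecMulVec x' x')ᵀ * A)
          + lam * ((x - x') ⬝ᵥ (B *ᵥ vp)) := by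
      unfold measurement
      rw [Matrix.mul_add, Matrix.trace_add, Matrix.mul_smul, Matrix.trace_smul,
        dotProduct_add, dotProduct_smul]
      simp [smul_eq_mul]
      ring
    rw [hexp, hsubtr, hcons k i]
    ring
end
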